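/- For α ∈ (0,1), as r → ∞, ∫_{-r}^{r} ρ_α(v)(1 - |v|/r) dv is asymptotically equivalent to 2 r^{2α-1} whenever α > 1/2; i.e. the ratio of the integral to 2 r^{2α-1} tends to 1. -/

import Mathlib

/-!
Write `ρ_b = Δ²(|·|^b)` for the centred second difference `Δ² g (v) = g(v+1) + g(v-1) - 2 g(v)`.
For `b > 1`, `|·|^b` is the second derivative of `ψ = |·|^(b+2) / ((b+1)(b+2))`, so `ρ_b = (Δ²ψ)''`.
Since `ρ_b` is even, integrating twice by parts against the tent `1 - v/r` on `[0, r]` gives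
`∫_{-r}^{r} ρ_b(v) (1 - |v|/r) dv = 2 (Δ²ψ(r) - Δ²ψ(0)) / r`, which is the closed form.
Finally `(r+1)^q + (r-1)^q - 2 r^q ~ q (q-1) r^(q-2)`: with `h = 1/r` this is the symmetric second
difference quotient of `y ↦ y^q` at `1`, which tends to the second derivative by L'Hôpital's rule.
-/

open Filter Set Topology MeasureTheory intervalIntegral

theorem integral_neg_eq_two_mul_integral_of_even {g : ℝ → ℝ} (hg : ∀ x, g (-x) = g x) {r : ℝ}
    (hint : IntervalIntegrable g volume 0 r) :
    ∫ v in (-r)..r, g v = 2 * ∫ v in (0 : ℝ)..r, g v := by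
  have hint' : IntervalIntegrable g volume (-r) 0 := by
    simpa [hg] using (IntervalIntegrable.iff_comp_neg (by finiteness)).mp hint.symm
  have hhalf : ∫ v in (-r)..0, g v = ∫ v in (0 : ℝ)..r, g v := by
    simpa [hg] using (integral_comp_neg (a := 0) (b := r) g).symm
  rw [← integral_add_adjacent_intervals hint' hint, hhalf, two_mul]

theorem integral_mul_one_sub_div_eq_of_hasDerivAt {f f' f'' : ℝ → ℝ} {r : ℝ} (hr : r ≠ 0)
    (hf : ∀ x ∈ uIcc 0 r, HasDerivAt f (f' x) x) (hf' : ∀ x ∈ uIcc 0 r, HasDerivAt f' (f'' x) x)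
    (hf'' : IntervalIntegrable f'' volume 0 r) :
    ∫ v in (0 : ℝ)..r, f'' v * (1 - v / r) = (f r - f 0) / r - f' 0 := by
  have hF : ∀ x ∈ uIcc 0 r,
      HasDerivAt (fun v => f' v * (1 - v / r) + f v / r) (f'' x * (1 - x / r)) x := by
    intro x hx
    refine (((hf' x hx).mul (((hasDerivAt_id' x).div_const r).const_sub 1)).add
      ((hf x hx).div_const r)).congr_deriv ?_
    ring
  rw [integral_eq_sub_of_hasDerivAt hF
    (hf''.mul_continuousOn (by fun_prop : Continuous fun v : ℝ => 1 - v / r).continuousOn)]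
  field_simp
  ring

def secondDiff (g : ℝ → ℝ) (v : ℝ) : ℝ := g (v + 1) + g (v - 1) - 2 * g v

theorem secondDiff_neg {g : ℝ → ℝ} (hg : ∀ x, g (-x) = g x) (v : ℝ) :
    secondDiff g (-v) = secondDiff g v := by
  rw [secondDiff, secondDiff, ← hg (-v + 1), ← hg (-v - 1), ← hg (-v)]
  ring_nf

theorem hasDerivAt_secondDiff {g g' : ℝ → ℝ} (hg : ∀ x, HasDerivAt g (g' x) x) (v : ℝ) :
    HasDerivAt (secondDiff g) (secondDiff g' v) v :=
  (((hg (v + 1)).comp_add_const v 1).add ((hg (v - 1)).comp_sub_const v 1)).sub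
    ((hg v).const_mul 2)

theorem hasDerivAt_abs_rpow_mul_self {b : ℝ} (hb : 1 < b) (x : ℝ) :
    HasDerivAt (fun x => |x| ^ b * x) ((b + 1) * |x| ^ b) x := by
  refine ((hasDerivAt_abs_rpow x hb).mul (hasDerivAt_id' x)).congr_deriv ?_
  have hsq : |x| ^ (b - 2) * x ^ 2 = |x| ^ b := by
    rw [← sq_abs, ← Real.rpow_natCast, ← Real.rpow_add' (abs_nonneg x) (by norm_num; linarith)]
    norm_num
  linear_combination b * hsq

theorem integral_secondDiff_abs_rpow_mul_one_sub_abs_div {b r : ℝ} (hb : 1 < b) (hr : 1 ≤ r) :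
    ∫ v in (-r)..r, secondDiff (fun x => |x| ^ b) v * (1 - |v| / r) =
      2 * ((r + 1) ^ (b + 2) + (r - 1) ^ (b + 2) - 2 * r ^ (b + 2) - 2) /
        ((b + 1) * (b + 2) * r) := by
  set ψ : ℝ → ℝ := fun x => |x| ^ (b + 2) / ((b + 1) * (b + 2))
  set ψ' : ℝ → ℝ := fun x => |x| ^ b * x / (b + 1)
  have hψ : ∀ x, HasDerivAt ψ (ψ' x) x := fun x =>
    ((hasDerivAt_abs_rpow x (by linarith)).div_const _).congr_deriv (by
      rw [add_sub_cancel_right]; simp only [ψ']; field_simp)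
  have hψ' : ∀ x, HasDerivAt ψ' (|x| ^ b) x := fun x =>
    ((hasDerivAt_abs_rpow_mul_self hb x).div_const _).congr_deriv (by field_simp)
  have hcont : Continuous (secondDiff fun x => |x| ^ b) := by
    unfold secondDiff; fun_prop (disch := linarith)
  have hint : IntervalIntegrable (secondDiff fun x => |x| ^ b) volume 0 r :=
    hcont.intervalIntegrable 0 r
  have heven : ∀ v, secondDiff (fun x => |x| ^ b) (-v) * (1 - |-v| / r) =
      secondDiff (fun x => |x| ^ b) v * (1 - |v| / r) := fun v => by
    rw [secondDiff_neg (fun x => by rw [abs_neg]), abs_neg]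
  have hhalf : ∫ v in (0 : ℝ)..r, secondDiff (fun x => |x| ^ b) v * (1 - |v| / r) =
      ∫ v in (0 : ℝ)..r, secondDiff (fun x => |x| ^ b) v * (1 - v / r) := by
    refine integral_congr fun v hv => ?_
    rw [uIcc_of_le (by linarith)] at hv
    rw [abs_of_nonneg hv.1]
  rw [integral_neg_eq_two_mul_integral_of_even heven
      (hint.mul_continuousOn (by fun_prop : Continuous fun v : ℝ => 1 - |v| / r).continuousOn),
    hhalf, integral_mul_one_sub_div_eq_of_hasDerivAt (by linarith)
      (fun x _ => hasDerivAt_secondDiff hψ x) (fun x _ => hasDerivAt_secondDiff hψ' x) hint]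
  simp only [secondDiff, ψ, ψ']
  rw [abs_of_nonneg (by linarith : 0 ≤ r + 1), abs_of_nonneg (by linarith : 0 ≤ r - 1),
    abs_of_nonneg (by linarith : 0 ≤ r)]
  norm_num [Real.zero_rpow (by linarith : b + 2 ≠ 0)]
  field_simp
  ring

theorem HasDerivAt.tendsto_symmetric_second_difference_quotient {g g' : ℝ → ℝ} {a c : ℝ}
    (hg' : HasDerivAt g' c a) (hg : ∀ᶠ x in 𝓝 a, HasDerivAt g (g' x) x) :
    Tendsto (fun h => (g (a + h) + g (a - h) - 2 * g a) / h ^ 2) (𝓝[>] 0) (𝓝 c) := by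
  have hshift : ∀ᶠ h in 𝓝 (0 : ℝ),
      HasDerivAt g (g' (a + h)) (a + h) ∧ HasDerivAt g (g' (a - h)) (a - h) :=
    ((continuous_const_add a).tendsto' 0 a (add_zero a) |>.eventually hg).and
      ((continuous_sub_left a).tendsto' 0 a (sub_zero a) |>.eventually hg)
  have hslope := hasDerivAt_iff_tendsto_slope_zero.mp hg'
  have hslope_neg : Tendsto (fun t => (-t)⁻¹ • (g' (a + -t) - g' a)) (𝓝[>] 0) (𝓝 c) :=
    (hslope.mono_left (nhdsLT_le_nhdsNE 0)).comp
      (by simpa using tendsto_neg_nhdsGT_neg (a := (0 : ℝ)))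
  refine HasDerivAt.lhopital_zero_nhdsGT (f' := fun h => g' (a + h) - g' (a - h))
    (g' := fun h => 2 * h) ?_ ?_ ?_ ?_ ?_ ?_
  · filter_upwards [nhdsWithin_le_nhds hshift] with h ⟨hplus, hminus⟩
    exact ((hplus.comp_const_add a h).add (hminus.comp_const_sub a h)).sub_const _
  · exact Eventually.of_forall fun h => by simpa using hasDerivAt_pow 2 h
  · filter_upwards [self_mem_nhdsWithin] with h (hh : 0 < h) using by positivity
  · have hcont := hg.self_of_nhds.continuousAt
    have hplus : Tendsto (fun h => g (a + h)) (𝓝 0) (𝓝 (g a)) :=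
      hcont.tendsto.comp ((continuous_const_add a).tendsto' 0 a (add_zero a))
    have hminus : Tendsto (fun h => g (a - h)) (𝓝 0) (𝓝 (g a)) :=
      hcont.tendsto.comp ((continuous_sub_left a).tendsto' 0 a (sub_zero a))
    simpa [two_mul] using ((hplus.add hminus).sub_const (2 * g a)).mono_left nhdsWithin_le_nhds
  · exact ((continuous_pow 2).tendsto' 0 0 (by norm_num)).mono_left nhdsWithin_le_nhds
  · have hmean := ((hslope.mono_left (nhdsGT_le_nhdsNE 0)).add hslope_neg).div_const 2
    rw [add_self_div_two] at hmean
    refine hmean.congr' ?_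
    filter_upwards [self_mem_nhdsWithin] with h (hh : 0 < h)
    simp only [smul_eq_mul, ← sub_eq_add_neg]
    field_simp
    ring

theorem tendsto_rpow_second_difference_div_rpow (q : ℝ) :
    Tendsto (fun r : ℝ => ((r + 1) ^ q + (r - 1) ^ q - 2 * r ^ q) / r ^ (q - 2)) atTop
      (𝓝 (q * (q - 1))) := by
  have hderiv : ∀ᶠ y in 𝓝 (1 : ℝ), HasDerivAt (fun y => y ^ q) (q * y ^ (q - 1)) y := by
    filter_upwards [eventually_ne_nhds one_ne_zero] with y hy
    exact Real.hasDerivAt_rpow_const (Or.inl hy)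
  have hderiv2 : HasDerivAt (fun y => q * y ^ (q - 1)) (q * (q - 1)) 1 := by
    simpa using (Real.hasDerivAt_rpow_const (p := q - 1) (Or.inl one_ne_zero)).const_mul q
  refine ((hderiv2.tendsto_symmetric_second_difference_quotient hderiv).comp
    tendsto_inv_atTop_nhdsGT_zero).congr' ?_
  filter_upwards [eventually_gt_atTop 1] with r hr
  have hr0 : 0 < r := by linarith
  have hscale : ∀ s, 0 ≤ s → (r * s) ^ q = r ^ q * s ^ q := fun s hs =>
    Real.mul_rpow hr0.le hs
  have hq : r ^ q = r ^ (q - 2) * r ^ 2 := by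
    rw [← Real.rpow_natCast, ← Real.rpow_add hr0]; norm_num
  have h1 : r + 1 = r * (1 + r⁻¹) := by field_simp
  have h2 : r - 1 = r * (1 - r⁻¹) := by field_simp
  have hinv : r⁻¹ ≤ 1 := inv_le_one_of_one_le₀ hr.le
  simp only [Function.comp_apply]
  rw [h1, h2, hscale _ (by positivity), hscale _ (by linarith), hq, Real.one_rpow]
  field_simp

theorem stmt_6 (α : ℝ) (hα : 1/2 < α ∧ α < 1) :
    Tendsto (fun r : ℝ =>
        (∫ v in (-r)..r,
          (|v + 1| ^ (2*α) + |v - 1| ^ (2*α) - 2 * |v| ^ (2*α)) * (1 - |v| / r)) /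
        (2 * r ^ (2*α - 1)))
      atTop (nhds 1) := by
  have hb : 1 < 2 * α := by linarith [hα.1]
  have hlim := ((tendsto_rpow_second_difference_div_rpow (2 * α + 2)).sub
    ((tendsto_rpow_neg_atTop (by linarith : 0 < 2 * α)).const_mul 2)).div_const
      ((2 * α + 1) * (2 * α + 2))
  rw [show (2 * α + 2) * (2 * α + 2 - 1) - 2 * 0 = (2 * α + 1) * (2 * α + 2) by ring,
    div_self (mul_ne_zero (by linarith) (by linarith))] at hlim
  refine hlim.congr' ?_
  filter_upwards [eventually_ge_atTop 1] with r hr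
  have hr0 : 0 < r := by linarith
  have hI := integral_secondDiff_abs_rpow_mul_one_sub_abs_div hb hr
  simp only [secondDiff] at hI
  rw [hI, add_sub_cancel_right, Real.rpow_neg hr0.le, Real.rpow_sub_one hr0.ne']
  field_simp
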